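/- Let $A \subseteq C^\infty(M \times M)[t, t^{-1}]$ be the set of Laurent polynomials $\sum_p f_p t^{-p}$ such that each coefficient $f_p$ vanishes to order $p$ on the diagonal of $M \times M$ (no condition when $p \le 0$). Then $A$ is closed under multiplication of Laurent polynomials, i.e., $A$ is an $\mathbb{R}$-subalgebra. -/
import Mathlib


/-- A smooth function on `M × M` "vanishes to order `p ∈ ℤ` on the diagonal" when all its
derivatives of (total) order `< p` vanish at every diagonal point (vacuous for `p ≤ 0`). -/
def VanishesToOrderOnDiag (d : ℕ) (f : ((Fin d → ℝ) × (Fin d → ℝ)) → ℝ) (p : ℤ) : Prop :=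
  ∀ j : ℕ, (j : ℤ) < p → ∀ m : Fin d → ℝ, iteratedFDeriv ℝ j f (m, m) = 0

/-- Product of functions vanishing to orders `a` and `b` vanishes to order `a + b`. -/
lemma vanishes_mul {d : ℕ} {F G : ((Fin d → ℝ) × (Fin d → ℝ)) → ℝ}
    (hF : ContDiff ℝ (⊤ : ℕ∞) F) (hG : ContDiff ℝ (⊤ : ℕ∞) G) {a b : ℤ}
    (hFa : VanishesToOrderOnDiag d F a) (hGb : VanishesToOrderOnDiag d G b) :
    VanishesToOrderOnDiag d (fun z => F z * G z) (a + b) := by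
  intro j hj m
  have hnorm := norm_iteratedFDeriv_mul_le (𝕜 := ℝ) hF hG (m, m) (n := j) (by exact_mod_cast le_top)
  have hzero : ∀ i ∈ Finset.range (j + 1),
      (j.choose i : ℝ) * ‖iteratedFDeriv ℝ i F (m, m)‖ *
        ‖iteratedFDeriv ℝ (j - i) G (m, m)‖ = 0 := by
    intro i hi
    rw [Finset.mem_range_succ_iff] at hi
    by_cases hia : (i : ℤ) < a
    · rw [hFa i hia m]
      simp
    · push_neg at hia
      have : ((j - i : ℕ) : ℤ) < b := by
        rw [Nat.cast_sub hi]
        omega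
      rw [hGb (j - i) this m]
      simp
  rw [Finset.sum_eq_zero hzero] at hnorm
  exact norm_le_zero_iff.mp hnorm

/-- The algebra `A(𝕋M)` of Laurent polynomials `∑ f_p t^{-p}` whose coefficient `f_p`
vanishes to order `p` on the diagonal is closed under multiplication of Laurent
polynomials: the Cauchy product coefficients again have finite support, are smooth, and
vanish to the appropriate order on the diagonal. -/
theorem stmt7 (d : ℕ) (f g : ℤ → ((Fin d → ℝ) × (Fin d → ℝ)) → ℝ)
    (hf_fin : {p : ℤ | f p ≠ 0}.Finite) (hg_fin : {p : ℤ | g p ≠ 0}.Finite)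
    (hf_smooth : ∀ p, ContDiff ℝ (⊤ : ℕ∞) (f p)) (hg_smooth : ∀ p, ContDiff ℝ (⊤ : ℕ∞) (g p))
    (hf_van : ∀ p : ℤ, VanishesToOrderOnDiag d (f p) p)
    (hg_van : ∀ p : ℤ, VanishesToOrderOnDiag d (g p) p) :
    {p : ℤ | (fun z => ∑ᶠ q : ℤ, f q z * g (p - q) z) ≠ 0}.Finite ∧
      (∀ p : ℤ, ContDiff ℝ (⊤ : ℕ∞) (fun z => ∑ᶠ q : ℤ, f q z * g (p - q) z)) ∧
      (∀ p : ℤ, VanishesToOrderOnDiag d (fun z => ∑ᶠ q : ℤ, f q z * g (p - q) z) p) := by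
  classical
  set S : Finset ℤ := hf_fin.toFinset with hS
  have key : ∀ (p : ℤ) (z : (Fin d → ℝ) × (Fin d → ℝ)),
      (∑ᶠ q : ℤ, f q z * g (p - q) z) = ∑ q ∈ S, f q z * g (p - q) z := by
    intro p z
    apply finsum_eq_sum_of_support_subset
    intro q hq
    have hfq : f q ≠ 0 := by
      intro h
      apply hq
      simp [Function.mem_support, h]
    simpa [hS] using hf_fin.mem_toFinset.mpr hfq
  have keyf : ∀ p : ℤ, (fun z => ∑ᶠ q : ℤ, f q z * g (p - q) z)
      = fun z => ∑ q ∈ S, f q z * g (p - q) z := fun p => funext (key p)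
  refine ⟨?_, ?_, ?_⟩
  · apply Set.Finite.subset (hf_fin.image2 (· + ·) hg_fin)
    intro p hp
    simp only [Set.mem_setOf_eq] at hp
    have : ∃ z, (∑ᶠ q : ℤ, f q z * g (p - q) z) ≠ 0 := by
      by_contra h
      push_neg at h
      exact hp (funext h)
    obtain ⟨z, hz⟩ := this
    rw [key p z] at hz
    obtain ⟨q, _, hq⟩ := Finset.exists_ne_zero_of_sum_ne_zero hz
    have h1 : f q ≠ 0 := fun h => hq (by simp [h])
    have h2 : g (p - q) ≠ 0 := fun h => hq (by simp [h])
    exact ⟨q, h1, p - q, h2, by ring⟩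
  · intro p
    rw [keyf p]
    exact ContDiff.sum fun q _ => (hf_smooth q).mul (hg_smooth (p - q))
  · intro p j hj m
    rw [keyf p]
    have hsum : iteratedFDeriv ℝ j (fun z => ∑ q ∈ S, f q z * g (p - q) z) (m, m)
        = ∑ q ∈ S, iteratedFDeriv ℝ j (fun z => f q z * g (p - q) z) (m, m) := by
      have := iteratedFDeriv_sum (𝕜 := ℝ) (u := S)
        (f := fun q z => f q z * g (p - q) z) (i := j)
        (fun q _ => ((hf_smooth q).mul (hg_smooth (p - q))).of_le (by exact_mod_cast le_top))
      have h2 := congrFun this (m, m)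
      simpa using h2
    rw [hsum]
    apply Finset.sum_eq_zero
    intro q _
    have := vanishes_mul (hf_smooth q) (hg_smooth (p - q)) (hf_van q) (hg_van (p - q))
    have hj' : (j : ℤ) < q + (p - q) := by omega
    exact this j hj' m
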